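/- arXiv:0906.1275 — 3 statements merged into one kernel-verified Lean document; each statement's English description precedes it below -/
import Mathlib

section
/- Let R be a commutative ring, and let A, A' be abelian R-linear categories equipped with cohomological functors H^i to R-modules. Let V, V' be torsion-free objects with compatible maps u: H^1(V) → H^1(V') and u_f: H^1(V/fV) → H^1(V'/fV') commuting with reduction modulo f. Define S(V) = ker u and S(V/fV) = ker u_f. If f ∈ R is such that H^0(V'/fV') = 0, then the natural map S(V)/fS(V) → S(V/fV) is injective; moreover it is surjective whenever H^2(V)[f] = 0 and (H^1(V')/u(H^1(V)))[f] = 0. -/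
/-- Formalism of variation of Selmer groups (Prop. 2.1 / Remark 2.2 of the paper).
`H1V, H1V', H1Vf, H1V'f, H0V'f, H2V` stand for the cohomology modules
`H^1(V), H^1(V'), H^1(V/fV), H^1(V'/fV'), H^0(V'/fV'), H^2(V)`; the maps
`redV, redV', c, δ` are the maps of the long exact cohomology sequences of
`0 → V →^f V → V/fV → 0` and `0 → V' →^f V' → V'/fV' → 0` (with the stated
exactness properties), and `u, uf` are the compatible maps defining the Selmer
modules `S(V) = ker u`, `S(V/fV) = ker u_f`.  If `H^0(V'/fV') = 0` then the
natural map `S(V)/fS(V) → S(V/fV)` is injective, and it is surjective whenever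
`H^2(V)[f] = 0` and `(H^1(V')/u(H^1(V)))[f] = 0`. -/
theorem stmt_0 {R : Type*} [CommRing R] (f : R)
    {H1V H1V' H1Vf H1V'f H0V'f H2V : Type*}
    [AddCommGroup H1V] [Module R H1V] [AddCommGroup H1V'] [Module R H1V']
    [AddCommGroup H1Vf] [Module R H1Vf] [AddCommGroup H1V'f] [Module R H1V'f]
    [AddCommGroup H0V'f] [Module R H0V'f] [AddCommGroup H2V] [Module R H2V]
    (u : H1V →ₗ[R] H1V') (uf : H1Vf →ₗ[R] H1V'f)
    (redV : H1V →ₗ[R] H1Vf) (redV' : H1V' →ₗ[R] H1V'f)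
    (c : H1Vf →ₗ[R] H2V) (δ : H0V'f →ₗ[R] H1V')
    (hcomm : ∀ x : H1V, redV' (u x) = uf (redV x))
    (hfVf : ∀ y : H1Vf, f • y = 0) (hfV'f : ∀ y : H1V'f, f • y = 0)
    (hexact1 : ∀ x : H1V, redV x = 0 ↔ ∃ w, x = f • w)
    (hexact2 : ∀ y : H1Vf, c y = 0 ↔ ∃ x, redV x = y)
    (hexact3 : ∀ z : H1V', f • z = 0 ↔ ∃ t, δ t = z)
    (hexact4 : ∀ z : H1V', redV' z = 0 ↔ ∃ w, z = f • w)
    (hH0 : Subsingleton H0V'f) :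
    -- injectivity of `S(V)/fS(V) → S(V/fV)`
    (∀ x : H1V, u x = 0 → redV x = 0 → ∃ w, u w = 0 ∧ x = f • w) ∧
    -- surjectivity when `H^2(V)[f] = 0` and `(H^1(V')/u(H^1(V)))[f] = 0`
    ((∀ z : H2V, f • z = 0 → z = 0) →
     (∀ z : H1V', f • z ∈ LinearMap.range u → z ∈ LinearMap.range u) →
     ∀ y : H1Vf, uf y = 0 → ∃ x, u x = 0 ∧ redV x = y) := by
  constructor
  · intro x hux hrx
    obtain ⟨w, rfl⟩ := (hexact1 x).mp hrx
    refine ⟨w, ?_, rfl⟩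
    have hfw : f • u w = 0 := by rw [← map_smul]; exact hux
    obtain ⟨t, ht⟩ := (hexact3 (u w)).mp hfw
    rw [← ht, Subsingleton.elim t 0, map_zero]
  · intro h2 hcoker y huy
    have hcy : c y = 0 := h2 _ (by rw [← map_smul, hfVf, map_zero])
    obtain ⟨x0, hx0⟩ := (hexact2 y).mp hcy
    have : redV' (u x0) = 0 := by rw [hcomm, hx0, huy]
    obtain ⟨w, hw⟩ := (hexact4 (u x0)).mp this
    obtain ⟨v, hv⟩ := hcoker w ⟨x0, hw⟩
    refine ⟨x0 - f • v, ?_, ?_⟩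
    · rw [map_sub, map_smul, hv, ← hw, sub_self]
    · rw [map_sub, map_smul, hfVf, sub_zero, hx0]
end

section
/- Let S be a Noetherian ring, and suppose A is an operator on an S-module M = T^k·R_S^+ (for k a nonnegative integer) such that A := αφ − 1 is invertible on M with continuous inverse −Σ_{n≥0}(αφ)ⁿ. Then the S-linear map (R_S^+)^{αφ=1} → R_S^+ / T^k R_S^+ induced by reduction modulo T^k is injective, and since R_S^+/T^k R_S^+ is a free S-module of rank k, the module (R_S^+)^{αφ=1} is a finitely generated S-module. -/
open Filter

variable (S : Type*) [NormedCommRing S]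

/-- The convergence condition defining `R_S^+`: power series converging on the
open unit disc. -/
def RobbaPlusCond (a : ℕ → S) : Prop :=
  ∀ r : ℝ, 0 ≤ r → r < 1 → Tendsto (fun i : ℕ => ‖a i‖ * r ^ i) atTop (nhds 0)

/-- `R_S^+` as a submodule of `ℕ → S`. -/
def robbaPlus : Submodule S (ℕ → S) where
  carrier := {a | RobbaPlusCond S a}
  zero_mem' := by
    intro r hr0 hr1
    simp
  add_mem' := by
    intro a b ha hb r hr0 hr1
    refine squeeze_zero (fun i => by positivity) (fun i => ?_)
      (by simpa using (ha r hr0 hr1).add (hb r hr0 hr1))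
    calc ‖(a + b) i‖ * r ^ i ≤ (‖a i‖ + ‖b i‖) * r ^ i := by
          exact mul_le_mul_of_nonneg_right (norm_add_le _ _) (by positivity)
      _ = ‖a i‖ * r ^ i + ‖b i‖ * r ^ i := by ring
  smul_mem' := by
    intro c a ha r hr0 hr1
    refine squeeze_zero (fun i => by positivity) (fun i => ?_)
      (by simpa using (ha r hr0 hr1).const_mul ‖c‖)
    calc ‖(c • a) i‖ * r ^ i ≤ (‖c‖ * ‖a i‖) * r ^ i := by
          exact mul_le_mul_of_nonneg_right (norm_mul_le _ _) (by positivity)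
      _ = ‖c‖ * (‖a i‖ * r ^ i) := by ring

/-- The submodule `T^k R_S^+` of power series vanishing to order `k`. -/
def robbaPlusTk (k : ℕ) : Submodule S ↥(robbaPlus S) where
  carrier := {a | ∀ i, i < k → a.1 i = 0}
  zero_mem' := fun i _ => rfl
  add_mem' := by
    intro a b ha hb i hi
    show a.1 i + b.1 i = 0
    rw [ha i hi, hb i hi, add_zero]
  smul_mem' := by
    intro c a ha i hi
    show c * a.1 i = 0
    rw [ha i hi, mul_zero]

/-! A fixed point of `αφ` that vanishes modulo `T^k` lies in the kernel of `αφ - 1` on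
`T^k R_S^+`, which is trivial; so reduction modulo `T^k` embeds `(R_S^+)^{αφ=1}` into
`R_S^+/T^k R_S^+ ≅ S^k`, a Noetherian `S`-module. -/

namespace Submodule

variable {R M : Type*} [Ring R] [AddCommGroup M] [Module R M]

theorem injective_mkQ_comp_subtype_of_disjoint {p N : Submodule R M} (h : Disjoint p N) :
    Function.Injective (N.mkQ ∘ₗ p.subtype) := by
  rw [← LinearMap.ker_eq_bot, LinearMap.ker_comp, ker_mkQ, ← disjoint_iff_comap_eq_bot]
  exact h

end Submodule

namespace LinearMap

variable {R M : Type*} [Ring R] [AddCommGroup M] [Module R M]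

theorem disjoint_ker_of_injective_restrict {g : M →ₗ[R] M} {N : Submodule R M}
    (A : N →ₗ[R] N) (hA : ∀ x : N, (A x : M) = g x) (hinj : Function.Injective A) :
    Disjoint (ker g) N := by
  rw [Submodule.disjoint_def]
  intro x hx hxN
  have hAx : A ⟨x, hxN⟩ = 0 := Subtype.ext (by rw [hA]; exact hx)
  simpa using hinj (hAx.trans (map_zero A).symm)

end LinearMap

section RobbaPlus

variable {S}

theorem robbaPlusCond_of_eventually_eq_zero {a : ℕ → S} (ha : ∀ᶠ i in atTop, a i = 0) :
    RobbaPlusCond S a := fun r _ _ =>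
  tendsto_const_nhds.congr' (ha.mono fun i hi => by simp [hi])

variable (S) (k : ℕ)

/-- Reduction modulo `T^k`: the first `k` coefficients of a power series. -/
def robbaPlusTruncate : robbaPlus S →ₗ[S] (Fin k → S) where
  toFun a i := a.1 i
  map_add' _ _ := rfl
  map_smul' _ _ := rfl

theorem ker_robbaPlusTruncate : LinearMap.ker (robbaPlusTruncate S k) = robbaPlusTk S k := by
  ext a
  exact ⟨fun ha i hi => congrFun ha ⟨i, hi⟩, fun ha => funext fun i => ha i i.2⟩

theorem robbaPlusTruncate_surjective : Function.Surjective (robbaPlusTruncate S k) := by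
  classical
  intro v
  let a : ℕ → S := fun i => if h : i < k then v ⟨i, h⟩ else 0
  have ha : a ∈ robbaPlus S := robbaPlusCond_of_eventually_eq_zero <|
    eventually_atTop.2 ⟨k, fun i hi => dif_neg (not_lt.2 hi)⟩
  exact ⟨⟨a, ha⟩, funext fun i => dif_pos i.2⟩

noncomputable def robbaPlusQuotTkEquiv : (robbaPlus S ⧸ robbaPlusTk S k) ≃ₗ[S] (Fin k → S) :=
  (Submodule.quotEquivOfEq _ _ (ker_robbaPlusTruncate S k).symm).trans
    ((robbaPlusTruncate S k).quotKerEquivOfSurjective (robbaPlusTruncate_surjective S k))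

end RobbaPlus

/-- Finiteness of `(R_S^+)^{αφ=1}` (step in the proof of Prop. 3.9 of the paper):
if `A = αφ - 1` is invertible on `T^k R_S^+`, then reduction modulo `T^k` is
injective on `(R_S^+)^{αφ=1}`; since `R_S^+/T^k R_S^+` is free of rank `k` over
the Noetherian ring `S`, the module `(R_S^+)^{αφ=1}` is finitely generated. -/
theorem stmt_11 [IsNoetherianRing S] (k : ℕ) (α : Sˣ)
    (φ : ↥(robbaPlus S) →ₗ[S] ↥(robbaPlus S))
    (A : ↥(robbaPlusTk S k) →ₗ[S] ↥(robbaPlusTk S k))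
    (hA : ∀ x : ↥(robbaPlusTk S k), (A x : ↥(robbaPlus S)) = (α : S) • φ x.1 - x.1)
    (hAbij : Function.Bijective A) :
    Function.Injective
      (fun f : ↥(LinearMap.ker ((α : S) • φ - LinearMap.id)) =>
        Submodule.Quotient.mk (p := robbaPlusTk S k) f.1) ∧
    Nonempty ((↥(robbaPlus S) ⧸ robbaPlusTk S k) ≃ₗ[S] (Fin k → S)) ∧
    Module.Finite S ↥(LinearMap.ker ((α : S) • φ - LinearMap.id)) := by
  have hdisj : Disjoint (LinearMap.ker ((α : S) • φ - LinearMap.id)) (robbaPlusTk S k) :=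
    LinearMap.disjoint_ker_of_injective_restrict A (fun x => by simp [hA]) hAbij.1
  have hinj := Submodule.injective_mkQ_comp_subtype_of_disjoint hdisj
  have : IsNoetherian S (robbaPlus S ⧸ robbaPlusTk S k) :=
    isNoetherian_of_linearEquiv (robbaPlusQuotTkEquiv S k).symm
  exact ⟨hinj, ⟨robbaPlusQuotTkEquiv S k⟩, Module.Finite.of_injective _ hinj⟩
end

section
/- Let S be a reduced affinoid Q_p-algebra, G a profinite group as in Tate/Greenberg finiteness (e.g., G_{K,Σ} or a local Galois group), and V a locally free finite S-module with continuous G-action. Suppose Sp S admits an admissible affinoid covering (Sp S_n) such that each H^i(G, V ⊗_S S_n) is a finite S_n-module and H^i(G, V ⊗_S S_n) = H^i(G,V) ⊗_S S_n (by flatness of S_n over S). Then H^i(G, V) is a finite S-module. -/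
/-!
Pick a finitely generated `N ⊆ H` whose base change to each `A n` contains generators of
`A n ⊗ H`; by right exactness of `A n ⊗ -`, every `A n ⊗ (H ⧸ N)` vanishes. A module killed by
a flat family that is jointly surjective on primes is zero: a nonzero `m` gives
`S ⧸ ann m ↪ H`, and if `Q ⊆ A n` lies over a maximal ideal containing `ann m`, then
`A n ⊗ (S ⧸ ann m) = A n ⧸ (ann m) A n ≠ 0`. Hence `N = H`.
-/

open scoped TensorProduct

section

variable {S : Type*} [CommRing S] {M : Type*} [AddCommGroup M] [Module S M]

theorem TensorProduct.nontrivial_quotient_of_le_comap {A : Type*} [CommRing A] [Algebra S A]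
    (Q : Ideal A) [Q.IsPrime] {I : Ideal S} (hI : I ≤ Q.comap (algebraMap S A)) :
    Nontrivial (A ⊗[S] (S ⧸ I)) := by
  have hIA : I • (⊤ : Submodule S A) ≠ ⊤ := by
    rw [Ideal.smul_top_eq_map]
    exact (Submodule.restrictScalars_eq_top_iff _ _ _).ne.mpr fun htop ↦
      ‹Q.IsPrime›.ne_top <| top_le_iff.mp <| htop ▸ Ideal.map_le_iff_le_comap.2 hI
  have := Submodule.Quotient.nontrivial_iff.mpr hIA
  exact (TensorProduct.tensorQuotEquivQuotSMul A I).toEquiv.nontrivial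

theorem Module.subsingleton_of_forall_subsingleton_tensorProduct {ι : Type*}
    (A : ι → Type*) [∀ n, CommRing (A n)] [∀ n, Algebra S (A n)] [∀ n, Module.Flat S (A n)]
    (hcover : ∀ P : Ideal S, P.IsPrime →
      ∃ (n : ι) (Q : Ideal (A n)), Q.IsPrime ∧ Q.comap (algebraMap S (A n)) = P)
    (h : ∀ n, Subsingleton (A n ⊗[S] M)) : Subsingleton M := by
  refine subsingleton_of_forall_eq 0 fun m ↦ by_contra fun hm ↦ ?_
  obtain ⟨P, hP, hmP⟩ :=
    Ideal.exists_le_maximal _ ((Ideal.torsionOf_eq_top_iff S m).not.mpr hm)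
  obtain ⟨n, Q, hQ, rfl⟩ := hcover P hP.isPrime
  have hinj : Function.Injective
      ((S ∙ m).subtype ∘ₗ (Ideal.quotTorsionOfEquivSpanSingleton S M m).toLinearMap) :=
    (Submodule.injective_subtype _).comp (LinearEquiv.injective _)
  have := TensorProduct.nontrivial_quotient_of_le_comap Q hmP
  have := h n
  exact not_subsingleton _
    (Module.Flat.lTensor_preserves_injective_linearMap (M := A n) _ hinj).subsingleton

variable {A : Type*} [CommRing A] [Algebra S A]

theorem Submodule.exists_fg_lTensor_subtype_surjective [Module.Finite A (A ⊗[S] M)] :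
    ∃ N : Submodule S M, N.FG ∧ Function.Surjective (N.subtype.lTensor A) := by
  obtain ⟨s, hs⟩ := Module.Finite.fg_top (R := A) (M := A ⊗[S] M)
  obtain ⟨N, hNfin, hsN⟩ :=
    TensorProduct.exists_finite_submodule_right_of_setFinite (s : Set (A ⊗[S] M)) s.finite_toSet
  refine ⟨N, Module.Finite.iff_fg.1 hNfin, ?_⟩
  have : LinearMap.range (N.subtype.baseChange A) = ⊤ := by
    rw [← top_le_iff, ← hs, Submodule.span_le]
    rwa [LinearMap.coe_range, LinearMap.baseChange_eq_ltensor, ← LinearMap.coe_range]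
  rw [← LinearMap.baseChange_eq_ltensor]
  exact LinearMap.range_eq_top.1 this

theorem Submodule.lTensor_subtype_surjective_of_le {N N' : Submodule S M} (hle : N ≤ N')
    (h : Function.Surjective (N.subtype.lTensor A)) :
    Function.Surjective (N'.subtype.lTensor A) := by
  have : N.subtype.lTensor A = N'.subtype.lTensor A ∘ₗ (Submodule.inclusion hle).lTensor A := by
    rw [← LinearMap.lTensor_comp]; rfl
  rw [this, LinearMap.coe_comp] at h
  exact h.of_comp

theorem Submodule.subsingleton_tensorProduct_quotient {N : Submodule S M}
    (h : Function.Surjective (N.subtype.lTensor A)) : Subsingleton (A ⊗[S] (M ⧸ N)) := by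
  have hexact := lTensor_exact A (LinearMap.exact_subtype_mkQ N) N.mkQ_surjective
  refine subsingleton_of_forall_eq 0 fun x ↦ ?_
  obtain ⟨y, rfl⟩ := LinearMap.lTensor_surjective A N.mkQ_surjective x
  exact (hexact y).mpr (h y)

end

theorem Module.Finite.of_forall_finite_tensorProduct {S : Type*} [CommRing S] {ι : Type*}
    [Finite ι] (A : ι → Type*) [∀ n, CommRing (A n)] [∀ n, Algebra S (A n)]
    [∀ n, Module.Flat S (A n)]
    (hcover : ∀ P : Ideal S, P.IsPrime →
      ∃ (n : ι) (Q : Ideal (A n)), Q.IsPrime ∧ Q.comap (algebraMap S (A n)) = P)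
    (M : Type*) [AddCommGroup M] [Module S M] [∀ n, Module.Finite (A n) (A n ⊗[S] M)] :
    Module.Finite S M := by
  choose N hNfg hN using fun n ↦
    Submodule.exists_fg_lTensor_subtype_surjective (S := S) (A := A n) (M := M)
  have hquot (n : ι) : Subsingleton (A n ⊗[S] (M ⧸ ⨆ n, N n)) :=
    Submodule.subsingleton_tensorProduct_quotient
      (Submodule.lTensor_subtype_surjective_of_le (le_iSup N n) (hN n))
  have := Module.subsingleton_of_forall_subsingleton_tensorProduct A hcover hquot
  rw [Module.finite_def, ← Submodule.Quotient.subsingleton_iff.1 this]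
  exact Submodule.fg_iSup N hNfg

theorem stmt_16_general {S : Type*} [CommRing S]
    (ι : Type*) [Finite ι]
    (A : ι → Type*) [∀ n, CommRing (A n)] [∀ n, Algebra S (A n)]
    (hflat : ∀ n, Module.Flat S (A n))
    (hcover : ∀ P : Ideal S, P.IsPrime →
      ∃ (n : ι) (Q : Ideal (A n)), Q.IsPrime ∧ Q.comap (algebraMap S (A n)) = P)
    (H : Type*) [AddCommGroup H] [Module S H]   -- `H = H^i(G,V)`
    (hfin : ∀ n, Module.Finite (A n) (A n ⊗[S] H)) :
    Module.Finite S H :=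
  Module.Finite.of_forall_finite_tensorProduct A hcover H

/-- Kiehl-type gluing of finiteness: if `Sp S` has an admissible (finite, flat,
jointly surjective on primes) affinoid covering `Sp Sₙ` such that each
`H^i(G, V ⊗ Sₙ) = H^i(G,V) ⊗_S Sₙ` is a finite `Sₙ`-module, then `H^i(G,V)` is a
finite `S`-module.  Here `H` stands for the continuous cohomology `S`-module
`H^i(G,V)` of the profinite group `G` with coefficients in the locally free
`S`-module `V`. -/
theorem stmt_16 {S : Type*} [CommRing S] (p : ℕ) [Fact p.Prime]
    (G : Type*) [Group G] [TopologicalSpace G] [IsTopologicalGroup G]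
    [CompactSpace G] [TotallyDisconnectedSpace G]
    (V : Type*) [AddCommGroup V] [Module S V] [Module.Finite S V] [Module.Projective S V]
    (ι : Type*) [Finite ι]
    (A : ι → Type*) [∀ n, CommRing (A n)] [∀ n, Algebra S (A n)]
    (hflat : ∀ n, Module.Flat S (A n))
    (hcover : ∀ P : Ideal S, P.IsPrime →
      ∃ (n : ι) (Q : Ideal (A n)), Q.IsPrime ∧ Q.comap (algebraMap S (A n)) = P)
    (H : Type*) [AddCommGroup H] [Module S H]   -- `H = H^i(G,V)`
    (i : ℕ)
    (hfin : ∀ n, Module.Finite (A n) (A n ⊗[S] H)) :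
    Module.Finite S H :=
  stmt_16_general ι A hflat hcover H hfin
end
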